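/- arXiv:2605.11285 — 2 statements merged into one kernel-verified Lean document; each statement's English description precedes it below -/
import Mathlib

section
/- Weyl's inequality for singular values: for arbitrary complex matrices X and Y of the same size with singular values s_0(X) ≤ s_1(X) ≤ … and s_0(Y) ≤ s_1(Y) ≤ … listed in increasing order, we have max_j |s_j(X) - s_j(Y)| ≤ ||X - Y||. -/
/-! Order the singular values increasingly. On the span of the right singular vectors of `X`
belonging to its `m - j` largest singular values, `‖X x‖ ≥ s_j(X) ‖x‖`; on the span of those of `Y`
belonging to its `j + 1` smallest ones, `‖Y x‖ ≤ s_j(Y) ‖x‖`. The dimensions add up to `m + 1`, so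
the two subspaces share some `x ≠ 0`, and then
`s_j(X) ‖x‖ ≤ ‖X x‖ ≤ ‖Y x‖ + ‖(X - Y) x‖ ≤ (s_j(Y) + ‖X - Y‖) ‖x‖`. -/

open scoped Matrix.Norms.L2Operator ComplexOrder

/-- The singular values of a complex square matrix `A`. -/
noncomputable def singularValues {n : Type*} [Fintype n] [DecidableEq n]
    (A : Matrix n n ℂ) : n → ℝ :=
  fun i => Real.sqrt ((Matrix.posSemidef_conjTranspose_mul_self A).isHermitian.eigenvalues i)

open Module Submodule RCLike
open scoped InnerProductSpace

theorem Submodule.exists_ne_zero_mem_inf_of_finrank_lt_add {K V : Type*} [DivisionRing K]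
    [AddCommGroup V] [Module K V] [FiniteDimensional K V] {W₁ W₂ : Submodule K V}
    (h : finrank K V < finrank K W₁ + finrank K W₂) : ∃ x ∈ W₁ ⊓ W₂, x ≠ 0 := by
  refine exists_mem_ne_zero_of_ne_bot fun hbot => ?_
  have hdim := finrank_sup_add_finrank_inf_eq W₁ W₂
  have hsup := (W₁ ⊔ W₂).finrank_le
  rw [hbot, finrank_bot] at hdim
  omega

namespace OrthonormalBasis

variable {ι 𝕜 E : Type*} [Fintype ι] [RCLike 𝕜] [NormedAddCommGroup E] [InnerProductSpace 𝕜 E]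
  (b : OrthonormalBasis ι 𝕜 E)

theorem repr_eq_zero_of_mem_span_image {S : Set ι} {x : E} (hx : x ∈ span 𝕜 (b '' S)) {i : ι}
    (hi : i ∉ S) : b.repr x i = 0 := by
  have hle : span 𝕜 (b '' S) ≤ LinearMap.ker (innerₛₗ 𝕜 (b i)) := by
    rw [span_le]
    rintro _ ⟨j, hj, rfl⟩
    exact b.orthonormal.inner_eq_zero fun hij => hi (hij ▸ hj)
  simpa [b.repr_apply_apply] using hle hx

theorem finrank_span_image (S : Finset ι) : finrank 𝕜 (span 𝕜 (b '' S)) = S.card := by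
  classical
  have hinj := b.orthonormal.linearIndependent.injective
  rw [← Finset.coe_image, finrank_span_finset_eq_card, Finset.card_image_of_injective S hinj]
  rw [Finset.coe_image]
  exact (b.orthonormal.linearIndependent.linearIndepOn _).id_image

theorem sum_mul_norm_repr_sq_le {S : Set ι} {μ : ι → ℝ} {c : ℝ} (hμ : ∀ i ∈ S, μ i ≤ c) {x : E}
    (hx : x ∈ span 𝕜 (b '' S)) : ∑ i, μ i * ‖b.repr x i‖ ^ 2 ≤ c * ‖x‖ ^ 2 := by
  rw [← b.repr.norm_map, EuclideanSpace.norm_sq_eq, Finset.mul_sum]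
  refine Finset.sum_le_sum fun i _ => ?_
  by_cases hi : i ∈ S
  · exact mul_le_mul_of_nonneg_right (hμ i hi) (sq_nonneg _)
  · simp [b.repr_eq_zero_of_mem_span_image hx hi]

theorem mul_norm_sq_le_sum_mul_norm_repr_sq {S : Set ι} {μ : ι → ℝ} {c : ℝ}
    (hμ : ∀ i ∈ S, c ≤ μ i) {x : E} (hx : x ∈ span 𝕜 (b '' S)) :
    c * ‖x‖ ^ 2 ≤ ∑ i, μ i * ‖b.repr x i‖ ^ 2 := by
  have := b.sum_mul_norm_repr_sq_le (μ := -μ) (c := -c) (fun i hi => neg_le_neg (hμ i hi)) hx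
  simpa only [Pi.neg_apply, neg_mul, Finset.sum_neg_distrib, neg_le_neg_iff] using this

end OrthonormalBasis

namespace Matrix

variable {𝕜 : Type*} [RCLike 𝕜] {n : Type*} [Fintype n] [DecidableEq n]

theorem IsHermitian.repr_toEuclideanLin_apply {A : Matrix n n 𝕜} (hA : A.IsHermitian)
    (x : EuclideanSpace 𝕜 n) (i : n) :
    hA.eigenvectorBasis.repr (toEuclideanLin A x) i
      = hA.eigenvalues i * hA.eigenvectorBasis.repr x i := by
  have hAb : toEuclideanLin A (hA.eigenvectorBasis i)
      = (hA.eigenvalues i : 𝕜) • hA.eigenvectorBasis i := by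
    rw [toLpLin_apply, hA.mulVec_eigenvectorBasis, ← RCLike.real_smul_eq_coe_smul (K := 𝕜)]
    rfl
  rw [OrthonormalBasis.repr_apply_apply, OrthonormalBasis.repr_apply_apply,
    ← isSymmetric_toEuclideanLin_iff.mpr hA, hAb, inner_smul_left, conj_ofReal]

theorem IsHermitian.re_inner_toEuclideanLin_self {A : Matrix n n 𝕜} (hA : A.IsHermitian)
    (x : EuclideanSpace 𝕜 n) :
    re ⟪x, toEuclideanLin A x⟫_𝕜
      = ∑ i, hA.eigenvalues i * ‖hA.eigenvectorBasis.repr x i‖ ^ 2 := by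
  rw [← hA.eigenvectorBasis.sum_inner_mul_inner, map_sum]
  refine Finset.sum_congr rfl fun i _ => ?_
  rw [← OrthonormalBasis.repr_apply_apply, hA.repr_toEuclideanLin_apply, ← inner_conj_symm,
    ← OrthonormalBasis.repr_apply_apply, mul_left_comm, RCLike.conj_mul]
  norm_cast

theorem norm_toEuclideanLin_sq {m : Type*} [Fintype m] [DecidableEq m] (X : Matrix m n 𝕜)
    (x : EuclideanSpace 𝕜 n) :
    ‖toEuclideanLin X x‖ ^ 2 = re ⟪x, toEuclideanLin (Xᴴ * X) x⟫_𝕜 := by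
  rw [toLpLin_mul_same, LinearMap.comp_apply, toEuclideanLin_conjTranspose_eq_adjoint,
    LinearMap.adjoint_inner_right, inner_self_eq_norm_sq]

end Matrix

open Matrix

section SingularValues

variable {n : Type*} [Fintype n] [DecidableEq n]

noncomputable abbrev rightSingularVectors (X : Matrix n n ℂ) :
    OrthonormalBasis n ℂ (EuclideanSpace ℂ n) :=
  (posSemidef_conjTranspose_mul_self X).isHermitian.eigenvectorBasis

theorem singularValues_nonneg (X : Matrix n n ℂ) (i : n) : 0 ≤ singularValues X i :=
  Real.sqrt_nonneg _

theorem sq_singularValues (X : Matrix n n ℂ) (i : n) :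
    singularValues X i ^ 2 = (posSemidef_conjTranspose_mul_self X).isHermitian.eigenvalues i :=
  Real.sq_sqrt ((posSemidef_conjTranspose_mul_self X).eigenvalues_nonneg i)

theorem norm_toEuclideanLin_sq_eq_sum (X : Matrix n n ℂ) (x : EuclideanSpace ℂ n) :
    ‖toEuclideanLin X x‖ ^ 2
      = ∑ i, singularValues X i ^ 2 * ‖(rightSingularVectors X).repr x i‖ ^ 2 := by
  simp only [sq_singularValues]
  rw [norm_toEuclideanLin_sq, IsHermitian.re_inner_toEuclideanLin_self]

variable {X : Matrix n n ℂ} {S : Set n} {x : EuclideanSpace ℂ n}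

theorem mul_norm_le_norm_toEuclideanLin {c : ℝ} (hc : ∀ i ∈ S, c ≤ singularValues X i)
    (hx : x ∈ span ℂ (rightSingularVectors X '' S)) : c * ‖x‖ ≤ ‖toEuclideanLin X x‖ := by
  rcases lt_or_ge c 0 with hneg | hc0
  · exact (mul_nonpos_of_nonpos_of_nonneg hneg.le (norm_nonneg x)).trans (norm_nonneg _)
  refine (pow_le_pow_iff_left₀ (by positivity) (norm_nonneg _) two_ne_zero).mp ?_
  rw [mul_pow, norm_toEuclideanLin_sq_eq_sum]
  exact (rightSingularVectors X).mul_norm_sq_le_sum_mul_norm_repr_sq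
    (fun i hi => pow_le_pow_left₀ hc0 (hc i hi) 2) hx

theorem norm_toEuclideanLin_le_mul_norm {d : ℝ} (hd : ∀ i ∈ S, singularValues X i ≤ d)
    (hx : x ∈ span ℂ (rightSingularVectors X '' S)) : ‖toEuclideanLin X x‖ ≤ d * ‖x‖ := by
  rcases lt_or_ge d 0 with hneg | hd0
  · have hS : S = ∅ := Set.eq_empty_of_forall_notMem fun i hi =>
      ((hd i hi).trans_lt hneg).not_ge (singularValues_nonneg X i)
    subst hS
    rw [Set.image_empty, span_empty, mem_bot] at hx
    simp [hx]
  refine (pow_le_pow_iff_left₀ (norm_nonneg _) (by positivity) two_ne_zero).mp ?_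
  rw [mul_pow, norm_toEuclideanLin_sq_eq_sum]
  exact (rightSingularVectors X).sum_mul_norm_repr_sq_le
    (fun i hi => pow_le_pow_left₀ (singularValues_nonneg X i) (hd i hi) 2) hx

theorem le_add_norm_sub_of_card_lt_card_add_card {X Y : Matrix n n ℂ} {S T : Finset n}
    (hST : Fintype.card n < S.card + T.card) {c d : ℝ} (hc : ∀ i ∈ S, c ≤ singularValues X i)
    (hd : ∀ i ∈ T, singularValues Y i ≤ d) : c ≤ d + ‖X - Y‖ := by
  obtain ⟨x, ⟨hxS, hxT⟩, hx0⟩ := exists_ne_zero_mem_inf_of_finrank_lt_add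
    (W₁ := span ℂ (rightSingularVectors X '' S)) (W₂ := span ℂ (rightSingularVectors Y '' T))
    (by rwa [finrank_euclideanSpace, OrthonormalBasis.finrank_span_image,
      OrthonormalBasis.finrank_span_image])
  refine le_of_mul_le_mul_right ?_ (norm_pos_iff.mpr hx0)
  calc c * ‖x‖ ≤ ‖toEuclideanLin X x‖ := mul_norm_le_norm_toEuclideanLin hc hxS
    _ ≤ ‖toEuclideanLin Y x‖ + ‖toEuclideanLin (X - Y) x‖ := by
      rw [map_sub, LinearMap.sub_apply]
      exact norm_le_norm_add_norm_sub' _ _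
    _ ≤ d * ‖x‖ + ‖X - Y‖ * ‖x‖ :=
      add_le_add (norm_toEuclideanLin_le_mul_norm hd hxT) (l2_opNorm_mulVec _ _)
    _ = (d + ‖X - Y‖) * ‖x‖ := by ring

end SingularValues

theorem monotone_singularValues_le_add_norm_sub {m : ℕ} {X Y : Matrix (Fin m) (Fin m) ℂ}
    {sX sY : Fin m → ℝ} (hmX : Monotone sX) (hmY : Monotone sY) {σ τ : Equiv.Perm (Fin m)}
    (hσ : sX = singularValues X ∘ σ) (hτ : sY = singularValues Y ∘ τ) (j : Fin m) :
    sX j ≤ sY j + ‖X - Y‖ := by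
  subst hσ hτ
  refine le_add_norm_sub_of_card_lt_card_add_card (S := (Finset.Ici j).map σ.toEmbedding)
    (T := (Finset.Iic j).map τ.toEmbedding) ?_ ?_ ?_
  · simp only [Finset.card_map, Fin.card_Ici, Fin.card_Iic, Fintype.card_fin]
    omega
  · simp only [Finset.mem_map_equiv]
    intro i hi
    simpa using hmX (Finset.mem_Ici.mp hi)
  · simp only [Finset.mem_map_equiv]
    intro i hi
    simpa using hmY (Finset.mem_Iic.mp hi)

/-- Weyl's inequality for singular values: if `sX` and `sY` are the singular values of
`X` and `Y` listed in nondecreasing order, then `|sX j - sY j| ≤ ‖X - Y‖` for every `j`,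
where `‖·‖` is the operator norm. -/
theorem weyl_inequality_singularValues {m : ℕ}
    (X Y : Matrix (Fin m) (Fin m) ℂ)
    (sX sY : Fin m → ℝ) (hmX : Monotone sX) (hmY : Monotone sY)
    (hsX : ∃ σ : Equiv.Perm (Fin m), sX = singularValues X ∘ σ)
    (hsY : ∃ σ : Equiv.Perm (Fin m), sY = singularValues Y ∘ σ) :
    ∀ j, |sX j - sY j| ≤ ‖X - Y‖ := by
  obtain ⟨σ, hσ⟩ := hsX
  obtain ⟨τ, hτ⟩ := hsY
  intro j
  have hXY := monotone_singularValues_le_add_norm_sub hmX hmY hσ hτ j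
  have hYX := monotone_singularValues_le_add_norm_sub hmY hmX hτ hσ j
  rw [norm_sub_rev] at hYX
  exact abs_sub_le_iff.mpr ⟨by linarith, by linarith⟩
end

section
/- Let m ≥ 2 and define x_k = sin²((2k-1)π/(4m)) for k = 1,…,m. Then for each fixed k, the product over j ≠ k of |x_j / (x_j - x_k)| equals (1/m)·cot((2k-1)π/(4m)). -/
/-- The Chebyshev nodes `x_k = sin²((2k-1)π/(4m))`. -/
noncomputable def chebNode (m k : ℕ) : ℝ :=
  Real.sin ((2 * (k : ℝ) - 1) * Real.pi / (4 * m)) ^ 2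

/-!
With `θ_k = (2k-1)π/(4m)` we have `1 - 2 x_k = cos 2θ_k`, so the `x_k` are the `m` roots of
`p(x) = T_m(1 - 2x)`, a polynomial of degree `m` with `p(0) = T_m(1) = 1`. Writing `p` as a
multiple of the nodal polynomial `∏ (X - x_j)` gives the Lagrange-type identity
`∏_{j ≠ k} x_j / (x_j - x_k) = -p(0) / (x_k p'(x_k))`, and `T_m' = m U_{m-1}` yields
`|p'(x_k)| sin 2θ_k = 2m`. Hence the product is `sin 2θ_k / (2m sin² θ_k) = cot θ_k / m`.
-/

open Polynomial Finset Lagrange Real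

section Nodal

variable {F ι : Type*} [Field F] {s : Finset ι} {v : ι → F} {p : F[X]}

theorem eq_C_leadingCoeff_mul_nodal (hvs : Set.InjOn v s) (hdeg : p.degree = #s)
    (hroot : ∀ i ∈ s, p.eval (v i) = 0) : p = C p.leadingCoeff * nodal s v := by
  have hp : p ≠ 0 := by
    rintro rfl
    simp at hdeg
  have hlc : p.leadingCoeff ≠ 0 := leadingCoeff_ne_zero.mpr hp
  refine eq_of_degree_le_of_eval_index_eq s hvs hdeg.le ?_ ?_ ?_
  · rw [degree_C_mul hlc, degree_nodal, hdeg]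
  · rw [leadingCoeff_mul, leadingCoeff_C, nodal_monic.leadingCoeff, mul_one]
  · intro i hi
    rw [hroot i hi, eval_mul, eval_nodal_at_node hi, mul_zero]

theorem prod_div_sub_eq_neg_eval_zero_div [DecidableEq ι] (hvs : Set.InjOn v s)
    (hdeg : p.degree = #s) (hroot : ∀ i ∈ s, p.eval (v i) = 0) {k : ι} (hk : k ∈ s)
    (hvk : v k ≠ 0) :
    ∏ j ∈ s.erase k, v j / (v j - v k) = -p.eval 0 / (v k * (derivative p).eval (v k)) := by
  have hlc : p.leadingCoeff ≠ 0 := by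
    refine leadingCoeff_ne_zero.mpr fun hp => ?_
    simp [hp] at hdeg
  have hsub : (nodal (s.erase k) v).eval (v k) ≠ 0 := by
    refine eval_nodal (v := v) ▸ prod_ne_zero_iff.mpr fun j hj => sub_ne_zero.mpr fun h => ?_
    exact (ne_of_mem_erase hj) (hvs (mem_of_mem_erase hj) hk h.symm)
  have hfactor (j : ι) : v j / (v j - v k) = (0 - v j) / (v k - v j) := by
    rw [← neg_div_neg_eq, neg_sub, zero_sub]
  rw [prod_congr rfl fun j _ => hfactor j, prod_div_distrib, ← eval_nodal, ← eval_nodal,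
    eq_C_leadingCoeff_mul_nodal hvs hdeg hroot, derivative_C_mul, eval_mul, eval_mul, eval_C,
    eval_C, eval_nodal_derivative_eval_node_eq hk, nodal_eq_mul_nodal_erase hk, eval_mul, eval_sub,
    eval_X, eval_C]
  field_simp
  ring

end Nodal

noncomputable def chebAngle (m k : ℕ) : ℝ := (2 * (k : ℝ) - 1) * π / (4 * m)

theorem chebNode_eq_sin_chebAngle_sq (m k : ℕ) : chebNode m k = sin (chebAngle m k) ^ 2 := rfl

theorem chebAngle_mem_Ioo {m k : ℕ} (hk : k ∈ Icc 1 m) : chebAngle m k ∈ Set.Ioo 0 (π / 2) := by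
  obtain ⟨hk1, hkm⟩ := mem_Icc.mp hk
  have hk1' : (1 : ℝ) ≤ k := by exact_mod_cast hk1
  have hkm' : (k : ℝ) ≤ m := by exact_mod_cast hkm
  have hm : (0 : ℝ) < 4 * m := by linarith
  constructor
  · exact div_pos (mul_pos (by linarith) pi_pos) hm
  · rw [chebAngle, div_lt_iff₀ hm]
    nlinarith [pi_pos]

theorem natCast_mul_two_mul_chebAngle {m : ℕ} (hm : m ≠ 0) (k : ℕ) :
    m * (2 * chebAngle m k) = k * π - π / 2 := by
  rw [chebAngle]
  field_simp
  ring

theorem chebNode_pos {m k : ℕ} (hk : k ∈ Icc 1 m) : 0 < chebNode m k := by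
  obtain ⟨hθ0, hθ⟩ := chebAngle_mem_Ioo hk
  exact pow_pos (sin_pos_of_pos_of_lt_pi hθ0 (by linarith)) 2

theorem chebNode_strictMonoOn (m : ℕ) : StrictMonoOn (chebNode m) (Icc 1 m) := by
  intro j hj k hk hjk
  obtain ⟨hj0, hjπ⟩ := chebAngle_mem_Ioo hj
  obtain ⟨hk0, hkπ⟩ := chebAngle_mem_Ioo hk
  have hm : (0 : ℝ) < 4 * m := by
    have : 1 ≤ m := (mem_Icc.mp hk).1.trans (mem_Icc.mp hk).2
    positivity
  have hangle : chebAngle m j < chebAngle m k := by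
    rw [chebAngle, chebAngle, div_lt_div_iff_of_pos_right hm]
    gcongr
  have hsin : sin (chebAngle m j) < sin (chebAngle m k) :=
    strictMonoOn_sin ⟨by linarith, hjπ.le⟩ ⟨by linarith, hkπ.le⟩ hangle
  rw [chebNode_eq_sin_chebAngle_sq, chebNode_eq_sin_chebAngle_sq]
  exact pow_lt_pow_left₀ hsin (sin_pos_of_pos_of_lt_pi hj0 (by linarith)).le two_ne_zero

noncomputable def chebNodePoly (m : ℕ) : ℝ[X] := (Chebyshev.T ℝ m).comp (1 - C 2 * X)

theorem chebNodePoly_eval_zero (m : ℕ) : (chebNodePoly m).eval 0 = 1 := by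
  simp [chebNodePoly, eval_comp]

theorem degree_chebNodePoly (m : ℕ) : (chebNodePoly m).degree = m := by
  have hne : chebNodePoly m ≠ 0 := fun h => by simpa [h] using chebNodePoly_eval_zero m
  have hlin : (1 - C 2 * X : ℝ[X]).natDegree = 1 := by compute_degree!
  rw [degree_eq_natDegree hne, chebNodePoly, natDegree_comp, Chebyshev.natDegree_T, hlin]
  simp

theorem chebNodePoly_eval_sin_sq (m : ℕ) (θ : ℝ) :
    (chebNodePoly m).eval (sin θ ^ 2) = cos (m * (2 * θ)) := by
  simp only [chebNodePoly, eval_comp, eval_sub, eval_one, eval_mul, eval_C, eval_X,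
    ← cos_two_mul_eq_one_sub, Chebyshev.T_real_cos, Int.cast_natCast]

theorem derivative_chebNodePoly_eval_sin_sq_mul_sin (m : ℕ) (θ : ℝ) :
    (derivative (chebNodePoly m)).eval (sin θ ^ 2) * sin (2 * θ) = -2 * m * sin (m * (2 * θ)) := by
  have hU := Chebyshev.U_real_cos (2 * θ) ((m : ℤ) - 1)
  push_cast at hU
  rw [sub_add_cancel] at hU
  simp only [chebNodePoly, derivative_comp, derivative_sub, derivative_one, derivative_C_mul_X,
    Chebyshev.T_derivative_eq_U, Int.cast_natCast, mul_comp, natCast_comp, eval_mul, eval_C,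
    eval_natCast, eval_comp, eval_sub, eval_zero, eval_one, eval_X, ← cos_two_mul_eq_one_sub]
  rw [← hU]
  ring

theorem chebNodePoly_eval_chebNode {m k : ℕ} (hk : k ∈ Icc 1 m) :
    (chebNodePoly m).eval (chebNode m k) = 0 := by
  have hm : m ≠ 0 := by have := mem_Icc.mp hk; omega
  rw [chebNode_eq_sin_chebAngle_sq, chebNodePoly_eval_sin_sq, natCast_mul_two_mul_chebAngle hm,
    cos_sub_pi_div_two, sin_nat_mul_pi]

theorem abs_derivative_chebNodePoly_eval_chebNode_mul_sin {m k : ℕ} (hk : k ∈ Icc 1 m) :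
    |(derivative (chebNodePoly m)).eval (chebNode m k)| * sin (2 * chebAngle m k) = 2 * m := by
  have hm : m ≠ 0 := by have := mem_Icc.mp hk; omega
  obtain ⟨hθ0, hθ⟩ := chebAngle_mem_Ioo hk
  have hsin : 0 < sin (2 * chebAngle m k) := sin_pos_of_pos_of_lt_pi (by linarith) (by linarith)
  rw [← abs_of_pos hsin, ← abs_mul, chebNode_eq_sin_chebAngle_sq,
    derivative_chebNodePoly_eval_sin_sq_mul_sin, natCast_mul_two_mul_chebAngle hm,
    sin_sub_pi_div_two, cos_nat_mul_pi]
  simp [abs_mul]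

theorem chebNode_product_eq_cot_general (m : ℕ) (k : ℕ)
    (hk : k ∈ Finset.Icc 1 m) :
    ∏ j ∈ (Finset.Icc 1 m).erase k, |chebNode m j / (chebNode m j - chebNode m k)| =
      (1 / m) * Real.cot ((2 * (k : ℝ) - 1) * Real.pi / (4 * m)) := by
  change _ = 1 / m * cot (chebAngle m k)
  have hdeg : (chebNodePoly m).degree = #(Icc 1 m) := by simp [degree_chebNodePoly]
  rw [← abs_prod, prod_div_sub_eq_neg_eval_zero_div (chebNode_strictMonoOn m).injOn hdeg
    (fun j hj => chebNodePoly_eval_chebNode hj) hk (chebNode_pos hk).ne', chebNodePoly_eval_zero]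
  obtain ⟨hθ0, hθ⟩ := chebAngle_mem_Ioo hk
  have hsin : 0 < sin (chebAngle m k) := sin_pos_of_pos_of_lt_pi hθ0 (by linarith)
  have hcos : 0 < cos (chebAngle m k) := cos_pos_of_mem_Ioo ⟨by linarith, hθ⟩
  have hderiv : |(derivative (chebNodePoly m)).eval (chebNode m k)| =
      m / (sin (chebAngle m k) * cos (chebAngle m k)) := by
    have h := abs_derivative_chebNodePoly_eval_chebNode_mul_sin hk
    rw [sin_two_mul] at h
    field_simp
    linarith
  have hm : (m : ℝ) ≠ 0 := by have := mem_Icc.mp hk; norm_cast; omega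
  rw [abs_div, abs_neg, abs_one, abs_mul, abs_of_pos (chebNode_pos hk), hderiv,
    chebNode_eq_sin_chebAngle_sq, cot_eq_cos_div_sin]
  field_simp

/-- For Chebyshev nodes `x_k = sin²((2k-1)π/(4m))`, `k = 1,…,m`, and `m ≥ 2`:
`∏_{j ≠ k} |x_j / (x_j - x_k)| = (1/m) · cot((2k-1)π/(4m))`. -/
theorem chebNode_product_eq_cot (m : ℕ) (hm : 2 ≤ m) (k : ℕ)
    (hk : k ∈ Finset.Icc 1 m) :
    ∏ j ∈ (Finset.Icc 1 m).erase k, |chebNode m j / (chebNode m j - chebNode m k)| =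
      (1 / m) * Real.cot ((2 * (k : ℝ) - 1) * Real.pi / (4 * m)) :=
  chebNode_product_eq_cot_general m k hk
end
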